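/- The product ⋆ on ℤ⟨z_2,z_3⟩ is commutative: w ⋆ w' = w' ⋆ w for all w, w' in ℤ⟨z_2,z_3⟩. -/
import Mathlib


/-- A word in `ℤ⟨z₂,z₃⟩`, recorded as its list of indices (each `2` or `3`). -/
def IsWord23 (w : List ℕ) : Prop := ∀ k ∈ w, k = 2 ∨ k = 3

/-- Auxiliary star product on *reversed* words (the head of the list is the rightmost
letter `z_k` of the word), with values in the free `ℤ`-module on reversed words. -/
noncomputable def starAux : List ℕ → List ℕ → (List ℕ →₀ ℤ)
  | [], v => Finsupp.single v 1
  | u, [] => Finsupp.single u 1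
  | 2 :: u, v => Finsupp.mapDomain (2 :: ·) (starAux u v)
  | u, 2 :: v => Finsupp.mapDomain (2 :: ·) (starAux u v)
  | 3 :: u, 3 :: v =>
      Finsupp.mapDomain (3 :: ·) (starAux u (3 :: v)) +
      Finsupp.mapDomain (3 :: ·) (starAux (3 :: u) v) +
      Finsupp.mapDomain (fun l => 2 :: 2 :: 2 :: l) (starAux u v)
  | _, _ => 0
termination_by u v => u.length + v.length

/-- The star product of two words of `ℤ⟨z₂,z₃⟩` (written in natural left-to-right order),
as a `ℤ`-linear combination of words. -/
noncomputable def starW (u v : List ℕ) : List ℕ →₀ ℤ :=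
  Finsupp.mapDomain List.reverse (starAux u.reverse v.reverse)

/-- The `ℤ`-bilinear extension of the star product to the free `ℤ`-module on words. -/
noncomputable def starHS : (List ℕ →₀ ℤ) →ₗ[ℤ] (List ℕ →₀ ℤ) →ₗ[ℤ] (List ℕ →₀ ℤ) :=
  Finsupp.lsum ℤ fun u => LinearMap.toSpanSingleton ℤ _
    (Finsupp.lsum ℤ fun v => LinearMap.toSpanSingleton ℤ _ (starW u v))

lemma starAux_nil_right (v : List ℕ) : starAux v [] = Finsupp.single v 1 := by
  cases v <;> simp [starAux]

lemma starAux_two_left (u v : List ℕ) :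
    starAux (2 :: u) v = Finsupp.mapDomain (2 :: ·) (starAux u v) := by
  cases v with
  | nil => simp [starAux_nil_right, Finsupp.mapDomain_single]
  | cons y v => simp [starAux]

lemma starAux_two_right (u v : List ℕ) (hu : IsWord23 u) :
    starAux u (2 :: v) = Finsupp.mapDomain (2 :: ·) (starAux u v) := by
  induction u generalizing v with
  | nil => simp [starAux, Finsupp.mapDomain_single]
  | cons x u ih =>
    have hu' : IsWord23 u := fun k hk => hu k (by simp [hk])
    rcases hu x (by simp) with rfl | rfl
    · rw [starAux_two_left, starAux_two_left, ih _ hu']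
    · simp [starAux]

lemma starAux_comm_aux : ∀ n u v, u.length + v.length = n → IsWord23 u → IsWord23 v →
    starAux u v = starAux v u := by
  intro n
  induction n using Nat.strong_induction_on with
  | _ n ih =>
    intro u v hn hu hv
    match u, v with
    | [], v => simp [starAux, starAux_nil_right]
    | u, [] => simp [starAux, starAux_nil_right]
    | x :: u, y :: v =>
      have hu' : IsWord23 u := fun k hk => hu k (by simp [hk])
      have hv' : IsWord23 v := fun k hk => hv k (by simp [hk])
      subst hn
      have h3 : starAux u v = starAux v u :=
        ih _ (by simp only [List.length_cons]; omega) _ _ rfl hu' hv'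
      rcases hu x (by simp) with rfl | rfl <;> rcases hv y (by simp) with rfl | rfl
      · rw [starAux_two_left, starAux_two_left,
          starAux_two_right _ _ hu', starAux_two_right _ _ hv', h3]
      · rw [starAux_two_left, starAux_two_right _ _ hv]
        rw [ih _ (by simp only [List.length_cons]; omega) _ _ rfl hu' hv]
      · rw [starAux_two_left, starAux_two_right _ _ hu]
        rw [ih _ (by simp only [List.length_cons]; omega) _ _ rfl hu hv']
      · have h1 : starAux u (3 :: v) = starAux (3 :: v) u :=
          ih _ (by simp only [List.length_cons]; omega) _ _ rfl hu' hv
        have h2 : starAux (3 :: u) v = starAux v (3 :: u) :=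
          ih _ (by simp only [List.length_cons]; omega) _ _ rfl hu hv'
        simp only [starAux]
        rw [h1, h2, h3]
        abel

lemma starW_comm (u v : List ℕ) (hu : IsWord23 u) (hv : IsWord23 v) :
    starW u v = starW v u := by
  unfold starW
  rw [starAux_comm_aux (u.reverse.length + v.reverse.length) _ _ rfl
    (fun k hk => hu k (List.mem_reverse.mp hk))
    (fun k hk => hv k (List.mem_reverse.mp hk))]

/-- The star product on `ℤ⟨z₂,z₃⟩` is commutative. -/
theorem star_comm (a b : List ℕ →₀ ℤ)
    (ha : ∀ w ∈ a.support, IsWord23 w) (hb : ∀ w ∈ b.support, IsWord23 w) :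
    starHS a b = starHS b a := by
  have key : ∀ (a b : List ℕ →₀ ℤ), starHS a b =
      a.sum fun u m => b.sum fun v n => m • n • starW u v := by
    intro a b
    simp [starHS, Finsupp.lsum_apply, LinearMap.toSpanSingleton_apply,
      Finsupp.sum_apply', Finsupp.smul_sum, smul_smul, mul_comm]
  rw [key, key, Finsupp.sum_comm]
  refine Finsupp.sum_congr fun u hu => Finsupp.sum_congr fun v hv => ?_
  rw [starW_comm _ _ (hb u hu) (ha v hv), smul_comm]
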